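/- Let X ⊆ Σ^ℤ be a strongly synchronizing subshift with a characteristic pair of fixed points ((α₋)_{i∈ℤ}, (α₊)_{i∈ℤ}). Then the set Σ₋(X) of synchronizing symbols σ₋ for which 𝒟(σ₋, α₋) is nonempty is itself nonempty, and for every σ₋ ∈ Σ₋(X) the set 𝒟(σ₋, α₋) is finite. -/

import Mathlib

/-- The shift on `Σ^ℤ`: `(x_i)_{i∈ℤ} ↦ (x_{i+1})_{i∈ℤ}`. -/
def shift {A : Type*} (x : ℤ → A) : ℤ → A := fun i => x (i + 1)

/-- The word `x_{[a,b]}` carried by the block of `x` on the interval `[a, b]`. -/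
def block {A : Type*} (x : ℤ → A) (a b : ℤ) : List A :=
  (List.range (b + 1 - a).toNat).map fun k => x (a + k)

/-- A word is admissible for `X` if it appears in a point of `X`. -/
def Admissible {A : Type*} (X : Set (ℤ → A)) (w : List A) : Prop :=
  ∃ x ∈ X, ∃ n : ℤ, ∀ (k : ℕ) (h : k < w.length), x (n + k) = w.get ⟨k, h⟩

/-- A word `v` is synchronizing for `X` if it is admissible and whenever `uv` and `vw`
are admissible, so is `uvw`. -/
def IsSyncWord {A : Type*} (X : Set (ℤ → A)) (v : List A) : Prop :=
  Admissible X v ∧ ∀ u w : List A, Admissible X (u ++ v) → Admissible X (v ++ w) →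
    Admissible X (u ++ v ++ w)

/-- A subshift: a nonempty, closed, shift-invariant subset of `Σ^ℤ`. -/
def IsSubshift {A : Type*} [TopologicalSpace A] (X : Set (ℤ → A)) : Prop :=
  X.Nonempty ∧ IsClosed X ∧ shift '' X = X

/-- Topological transitivity of a subshift, expressed on its language: any two admissible
words can be joined by an admissible transition word. -/
def LangTransitive {A : Type*} (X : Set (ℤ → A)) : Prop :=
  ∀ u v : List A, Admissible X u → Admissible X v → ∃ w, Admissible X (u ++ w ++ v)

/-- A synchronizing subshift: topologically transitive with a synchronizing word. -/
def SyncSubshift {A : Type*} (X : Set (ℤ → A)) : Prop :=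
  LangTransitive X ∧ ∃ v : List A, IsSyncWord X v

/-- A strongly synchronizing subshift: synchronizing symbols appear uniformly close
(within distance `Q`) to synchronizing words. -/
def StronglySync {A : Type*} (X : Set (ℤ → A)) : Prop :=
  SyncSubshift X ∧ ∃ Q : ℕ, ∀ x ∈ X, ∀ I₁ I₂ : ℤ, I₁ ≤ I₂ →
    IsSyncWord X (block x I₁ I₂) →
    ∃ i : ℤ, I₁ - Q ≤ i ∧ i ≤ I₂ + Q ∧ IsSyncWord X [x i]

/-- The higher block system `X^{⟨[a,b]⟩}` of `X`, over the alphabet of words. -/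
def higherBlock {A : Type*} (X : Set (ℤ → A)) (a b : ℤ) : Set (ℤ → List A) :=
  { y | ∃ x ∈ X, ∀ i : ℤ, y i = block x (i + a) (i + b) }

/-- The constant (fixed) point of the shift with value `α`. -/
def constPt {A : Type*} (α : A) : ℤ → A := fun _ => α

/-- `x` is left asymptotic to the fixed point `(α)_{i∈ℤ}`. -/
def LeftAsym {A : Type*} (x : ℤ → A) (α : A) : Prop := ∃ n : ℤ, ∀ i ≤ n, x i = α

/-- `x` is right asymptotic to the fixed point `(α)_{i∈ℤ}`. -/
def RightAsym {A : Type*} (x : ℤ → A) (α : A) : Prop := ∃ n : ℤ, ∀ i ≥ n, x i = α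

/-- `x` contains a synchronizing word of `X`. -/
def ContainsSync {A : Type*} (X : Set (ℤ → A)) (x : ℤ → A) : Prop :=
  ∃ a b : ℤ, a ≤ b ∧ IsSyncWord X (block x a b)

/-- `x` and `y` lie on the same shift orbit. -/
def SameOrbit {A : Type*} (x y : ℤ → A) : Prop := ∃ n : ℤ, ∀ i : ℤ, y i = x (i + n)

/-- Condition (a): `X` has a unique orbit containing all points left asymptotic to `α₋`,
right asymptotic to `α₊`, not containing a synchronizing word. -/
def CondA {A : Type*} (X : Set (ℤ → A)) (αm αp : A) : Prop :=
  (∃ x ∈ X, LeftAsym x αm ∧ RightAsym x αp ∧ ¬ ContainsSync X x) ∧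
  ∀ x ∈ X, ∀ y ∈ X,
    (LeftAsym x αm ∧ RightAsym x αp ∧ ¬ ContainsSync X x) →
    (LeftAsym y αm ∧ RightAsym y αp ∧ ¬ ContainsSync X y) → SameOrbit x y

/-- Condition (b): `X` has a point left asymptotic to `α₊`, right asymptotic to `α₋`,
containing a synchronizing word. -/
def CondB {A : Type*} (X : Set (ℤ → A)) (αm αp : A) : Prop :=
  ∃ x ∈ X, LeftAsym x αp ∧ RightAsym x αm ∧ ContainsSync X x

/-- Condition (c⁻). -/
def CondCminus {A : Type*} (X : Set (ℤ → A)) (αm : A) : Prop :=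
  ∃ K : ℕ, 0 < K ∧ ∀ x ∈ X, ∀ I₁ I₂ : ℤ, I₁ ≤ I₂ →
    RightAsym x αm → IsSyncWord X (block x I₁ I₂) →
    (∀ k : ℕ, 0 < k → ¬ IsSyncWord X (block x (I₂ + 1) (I₂ + k))) →
    ∃ i : ℤ, I₁ < i ∧ i ≤ I₂ + K ∧ ∀ j ≥ i, x j = αm

/-- Condition (c⁺), time symmetric to (c⁻). -/
def CondCplus {A : Type*} (X : Set (ℤ → A)) (αp : A) : Prop :=
  ∃ K : ℕ, 0 < K ∧ ∀ x ∈ X, ∀ I₁ I₂ : ℤ, I₁ ≤ I₂ →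
    LeftAsym x αp → IsSyncWord X (block x I₁ I₂) →
    (∀ k : ℕ, 0 < k → ¬ IsSyncWord X (block x (I₁ - k) (I₁ - 1))) →
    ∃ i : ℤ, I₁ - K ≤ i ∧ i < I₂ ∧ ∀ j ≤ i, x j = αp

/-- `((α₋), (α₊))` is a pair of fixed points of `X` satisfying (a), (b), (c⁻), (c⁺). -/
def CondsPair {A : Type*} (X : Set (ℤ → A)) (αm αp : A) : Prop :=
  constPt αm ∈ X ∧ constPt αp ∈ X ∧
    CondA X αm αp ∧ CondB X αm αp ∧ CondCminus X αm ∧ CondCplus X αp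

/-- `((α₋), (α₊))` is a characteristic pair of fixed points: the unique pair of fixed
points satisfying conditions (a), (b), (c⁻), (c⁺). -/
def CharPair {A : Type*} (X : Set (ℤ → A)) (αm αp : A) : Prop :=
  CondsPair X αm αp ∧ ∀ βm βp : A, CondsPair X βm βp → βm = αm ∧ βp = αp

/-- The set `𝒟(σ, α)`: admissible words `d` containing no synchronizing symbol, not ending
in `α`, such that `σ d α^k` is admissible for all `k`. -/
def Dset {A : Type*} (X : Set (ℤ → A)) (σ α : A) : Set (List A) :=
  { d | (∀ s ∈ d, ¬ IsSyncWord X [s]) ∧ d.getLast? ≠ some α ∧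
        ∀ k : ℕ, Admissible X (σ :: (d ++ List.replicate k α)) }

/-!
Condition (b) gives a point of `X` right asymptotic to `α₋` that contains a synchronizing word,
hence, by strong synchronization, a synchronizing symbol. If `σ` is its last synchronizing symbol,
the word between `σ` and the constant tail `α₋^∞` lies in `𝒟(σ, α₋)`.

For finiteness, let `d ∈ 𝒟(σ, α₋)`. By compactness `X` contains the point `σ d α₋^∞` (with `σ` at
position `0`). Its block `x_{[0,Q]}` is synchronizing because it begins with `σ`. It cannot be
extended to the right to a longer synchronizing word, since such a word would need a synchronizing
symbol at a position `≥ 1`. Condition (c⁻) then makes the tail `α₋^∞` start by position `Q + K`,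
so `|d| ≤ Q + K`.
-/

open Filter Topology

section Words

variable {A : Type*}

lemma block_eq_map_range (x : ℤ → A) (a b : ℤ) :
    block x a b = (List.range (b + 1 - a).toNat).map fun k : ℕ => x (a + k) := by
  simp only [block, bind_pure_comp, List.map_eq_map, List.map_map]
  rfl

lemma length_block (x : ℤ → A) (a b : ℤ) : (block x a b).length = (b + 1 - a).toNat := by
  simp [block_eq_map_range]

lemma getElem_block (x : ℤ → A) (a b : ℤ) (k : ℕ) (h : k < (block x a b).length) :
    (block x a b)[k] = x (a + k) := by
  simp [block_eq_map_range]

lemma mem_block {x : ℤ → A} {a b : ℤ} {s : A} :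
    s ∈ block x a b ↔ ∃ j, a ≤ j ∧ j ≤ b ∧ x j = s := by
  simp only [block_eq_map_range, List.mem_map, List.mem_range]
  constructor
  · rintro ⟨k, hk, rfl⟩
    exact ⟨a + k, by omega, by omega, rfl⟩
  · rintro ⟨j, haj, hjb, rfl⟩
    exact ⟨(j - a).toNat, by omega, by congr 1; omega⟩

lemma block_self (x : ℤ → A) (a : ℤ) : block x a a = [x a] := by
  simp [block]

lemma block_append {x : ℤ → A} {a b c : ℤ} (hab : a ≤ b + 1) (hbc : b ≤ c) :
    block x a b ++ block x (b + 1) c = block x a c := by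
  apply List.ext_getElem
  · simp only [List.length_append, length_block]; omega
  · intro k h₁ h₂
    have := length_block x a b
    rw [getElem_block, List.getElem_append]
    split_ifs with hk
    · rw [getElem_block]
    · rw [getElem_block, length_block]; congr 1; omega

lemma block_eq_cons {x : ℤ → A} {a b : ℤ} (hab : a ≤ b) :
    block x a b = x a :: block x (a + 1) b := by
  rw [← block_append (by omega) hab, block_self, List.singleton_append]

lemma block_eq_replicate {x : ℤ → A} {a b : ℤ} {α : A} (h : ∀ j, a ≤ j → j ≤ b → x j = α) :
    block x a b = List.replicate (b + 1 - a).toNat α := by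
  rw [List.eq_replicate_iff, length_block]
  refine ⟨rfl, fun s hs => ?_⟩
  obtain ⟨j, haj, hjb, rfl⟩ := mem_block.1 hs
  exact h j haj hjb

end Words

section Subshift

variable {A : Type*} {X : Set (ℤ → A)}

lemma shift_injective : Function.Injective (shift : (ℤ → A) → ℤ → A) := fun x y h => by
  funext i
  simpa [shift] using congrFun h (i - 1)

lemma shift_mem_iff (hXs : shift '' X = X) {x : ℤ → A} : shift x ∈ X ↔ x ∈ X := by
  conv_lhs => rw [← hXs]
  exact shift_injective.mem_set_image

lemma translate_mem (hXs : shift '' X = X) {x : ℤ → A} (hx : x ∈ X) (n : ℤ) :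
    (fun i => x (n + i)) ∈ X := by
  induction n using Int.induction_on with
  | zero => simpa using hx
  | succ k ih =>
    convert (shift_mem_iff hXs).2 ih using 1
    funext i; simp only [shift]; ring_nf
  | pred k ih =>
    rw [← shift_mem_iff hXs]
    convert ih using 1
    funext i; simp only [shift]; ring_nf

lemma admissible_block {x : ℤ → A} (hx : x ∈ X) (a b : ℤ) : Admissible X (block x a b) :=
  ⟨x, hx, a, fun k h => by rw [List.get_eq_getElem, getElem_block]⟩

lemma Admissible.of_append_left {u w : List A} (h : Admissible X (u ++ w)) : Admissible X u := by
  obtain ⟨x, hx, n, hn⟩ := h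
  refine ⟨x, hx, n, fun k hk => ?_⟩
  simpa [List.getElem_append_left hk] using hn k (by simp; omega)

lemma Admissible.exists_mem_eq (hXs : shift '' X = X) {w : List A} (h : Admissible X w) :
    ∃ x ∈ X, ∀ (k : ℕ) (hk : k < w.length), x k = w[k] := by
  obtain ⟨x, hx, n, hn⟩ := h
  exact ⟨fun i => x (n + i), translate_mem hXs hx n, hn⟩

lemma IsSyncWord.append {v w : List A} (hv : IsSyncWord X v) (h : Admissible X (v ++ w)) :
    IsSyncWord X (v ++ w) := by
  refine ⟨h, fun u z hu hz => ?_⟩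
  have h₁ : Admissible X (u ++ v) := Admissible.of_append_left (by rwa [← List.append_assoc] at hu)
  simpa [List.append_assoc] using hv.2 u (w ++ z) h₁ (by rwa [← List.append_assoc])

lemma exists_mem_forall_eq_of_forall_exists [Finite A] [TopologicalSpace A] [DiscreteTopology A]
    (hXc : IsClosed X) (c : ℕ → A) (h : ∀ m : ℕ, ∃ x ∈ X, ∀ j < m, x j = c j) :
    ∃ y ∈ X, ∀ j : ℕ, y j = c j := by
  choose x hxX hx using h
  obtain ⟨y, hyX, φ, hφ, hlim⟩ := hXc.isCompact.tendsto_subseq hxX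
  refine ⟨y, hyX, fun j => ?_⟩
  have hconv : Tendsto (fun m => x (φ m) j) atTop (𝓝 (y j)) :=
    ((continuous_apply (j : ℤ)).tendsto y).comp hlim
  have hconst : (fun m => x (φ m) j) =ᶠ[atTop] fun _ => c j :=
    eventually_atTop.2 ⟨j + 1, fun m hm =>
      hx _ _ (lt_of_lt_of_le (show j < m by omega) (hφ.id_le m))⟩
  exact tendsto_nhds_unique (hconv.congr' hconst) tendsto_const_nhds

lemma getElem_append_replicate (w : List A) (α : A) (m k : ℕ)
    (hk : k < (w ++ List.replicate m α).length) :
    (w ++ List.replicate m α)[k] = w.getD k α := by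
  rw [List.getElem_append]
  split_ifs with h
  · rw [List.getD_eq_getElem]
  · rw [List.getElem_replicate, List.getD_eq_default]; omega

lemma exists_mem_of_forall_admissible_append_replicate [Finite A] [TopologicalSpace A]
    [DiscreteTopology A] (hXc : IsClosed X) (hXs : shift '' X = X) {w : List A} {α : A}
    (h : ∀ k : ℕ, Admissible X (w ++ List.replicate k α)) :
    ∃ y ∈ X, (∀ (k : ℕ) (hk : k < w.length), y k = w[k]) ∧ ∀ j : ℤ, w.length ≤ j → y j = α := by
  obtain ⟨y, hyX, hy⟩ := exists_mem_forall_eq_of_forall_exists hXc (fun k => w.getD k α) fun m => by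
    obtain ⟨x, hxX, hx⟩ := (h m).exists_mem_eq hXs
    exact ⟨x, hxX, fun k hk => by rw [hx k (by simp; omega), getElem_append_replicate]⟩
  refine ⟨y, hyX, fun k hk => by rw [hy, List.getD_eq_getElem], fun j hj => ?_⟩
  lift j to ℕ using by omega
  rw [hy, List.getD_eq_default]
  exact_mod_cast hj

end Subshift

section Dset

variable {A : Type*} {X : Set (ℤ → A)} {α : A}

lemma not_isSyncWord_singleton_of_condA {β : A} (h : CondA X α β) : ¬ IsSyncWord X [α] := by
  obtain ⟨⟨z, -, ⟨n, hn⟩, -, hz⟩, -⟩ := h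
  exact fun hα => hz ⟨n, n, le_rfl, by rwa [block_self, hn n le_rfl]⟩

lemma exists_greatest_isSyncWord_singleton {x : ℤ → A} {n : ℤ} (htail : ∀ j ≥ n, x j = α)
    (hα : ¬ IsSyncWord X [α]) (h : ∃ i, IsSyncWord X [x i]) :
    ∃ i, IsSyncWord X [x i] ∧ ∀ j > i, ¬ IsSyncWord X [x j] := by
  obtain ⟨i, hi, hmax⟩ := Int.exists_greatest_of_bdd
    ⟨n, fun j hj => by by_contra! hnj; exact hα (htail j hnj.le ▸ hj)⟩ h
  exact ⟨i, hi, fun j hj hsync => by have := hmax j hsync; omega⟩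

lemma Dset_nonempty_of_forall_not_isSyncWord {x : ℤ → A} (hx : x ∈ X) {i n : ℤ}
    (htail : ∀ j ≥ n, x j = α) (hlast : ∀ j > i, ¬ IsSyncWord X [x j]) :
    (Dset X (x i) α).Nonempty := by
  obtain ⟨m, hm, hmax⟩ := Int.exists_greatest_of_bdd (P := fun j => j = i ∨ (i < j ∧ x j ≠ α))
    ⟨max n i, fun j hj => by
      rcases hj with rfl | ⟨-, hxj⟩
      · exact le_max_right n j
      · by_contra! hj
        exact hxj (htail j (by omega))⟩ ⟨i, Or.inl rfl⟩
  have him : i ≤ m := hmax i (Or.inl rfl)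
  have hmtail : ∀ j > m, x j = α := fun j hj => by
    by_contra hxj
    have := hmax j (Or.inr ⟨by omega, hxj⟩)
    omega
  refine ⟨block x (i + 1) m, fun s hs => ?_, ?_, fun k => ?_⟩
  · obtain ⟨j, hij, -, rfl⟩ := mem_block.1 hs
    exact hlast j (by omega)
  · rcases hm with rfl | ⟨hlt, hxm⟩
    · simp [block_eq_map_range]
    · rw [← block_append (b := m - 1) (by omega) (by omega), sub_add_cancel, block_self,
        List.getLast?_concat]
      exact fun h => hxm (Option.some_injective _ h)
  · have hk : List.replicate k α = block x (m + 1) (m + k) := by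
      rw [block_eq_replicate fun j hj _ => hmtail j (by omega)]
      congr 1
      omega
    rw [hk, block_append (by omega) (by omega), ← block_eq_cons (by omega)]
    exact admissible_block hx _ _

lemma exists_forall_mem_Dset_length_le [Finite A] [TopologicalSpace A] [DiscreteTopology A]
    (hXc : IsClosed X) (hXs : shift '' X = X) (hss : StronglySync X) (hc : CondCminus X α)
    (hα : ¬ IsSyncWord X [α]) :
    ∃ N : ℕ, ∀ σ, IsSyncWord X [σ] → ∀ d ∈ Dset X σ α, d.length ≤ N := by
  obtain ⟨-, Q, hQ⟩ := hss
  obtain ⟨K, -, hK⟩ := hc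
  refine ⟨Q + K, fun σ hσ d ⟨hdsync, hdlast, hdadm⟩ => ?_⟩
  by_contra! hlong
  obtain ⟨y, hyX, hy, hytail⟩ :=
    exists_mem_of_forall_admissible_append_replicate (w := σ :: d) hXc hXs hdadm
  have hy0 : y 0 = σ := hy 0 (by simp)
  have hyd : ∀ (k : ℕ) (hk : k < d.length), y (k + 1) = d[k] := fun k hk => by
    have h := hy (k + 1) (by simp [hk])
    rwa [List.getElem_cons_succ, Nat.cast_succ] at h
  have hnosync : ∀ j : ℤ, 0 < j → ¬ IsSyncWord X [y j] := fun j hj => by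
    by_cases hjd : j ≤ d.length
    · obtain ⟨k, rfl⟩ : ∃ k : ℕ, j = k + 1 := ⟨(j - 1).toNat, by omega⟩
      rw [hyd k (by omega)]
      exact hdsync _ (List.getElem_mem _)
    · rw [hytail j (by simp; omega)]
      exact hα
  have hsync : IsSyncWord X (block y 0 Q) := by
    have h : block y 0 Q = [σ] ++ block y 1 Q := by
      rw [block_eq_cons (by omega), hy0, zero_add, List.singleton_append]
    rw [h]
    exact hσ.append (h ▸ admissible_block hyX 0 Q)
  have hnoext : ∀ k : ℕ, 0 < k → ¬ IsSyncWord X (block y (Q + 1) (Q + k)) := fun k hk hw => by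
    obtain ⟨j, hj, -, hjsync⟩ := hQ y hyX _ _ (by omega) hw
    exact hnosync j (by omega) hjsync
  obtain ⟨i, -, hiK, hi⟩ := hK y hyX 0 Q (by omega)
    ⟨d.length + 1, fun j hj => hytail j (by simp; omega)⟩ hsync hnoext
  obtain ⟨k, hk⟩ : ∃ k, d.length = k + 1 := ⟨d.length - 1, by omega⟩
  have hyk : y (k + 1) = α := hi _ (by omega)
  apply hdlast
  rw [List.getLast?_eq_getElem?, hk, Nat.add_sub_cancel, List.getElem?_eq_getElem (by omega),
    ← hyd k (by omega), hyk]

end Dset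

/-- Lemma 3.2: for a strongly synchronizing subshift with a characteristic pair of fixed
points, `Σ₋(X)` is nonempty and each `𝒟(σ₋, α₋)` is finite. -/
theorem stmt4 {A : Type*} [Fintype A]
    [TopologicalSpace A] [DiscreteTopology A]
    (X : Set (ℤ → A)) (hX : IsSubshift X) (hss : StronglySync X)
    (αm αp : A) (hchar : CharPair X αm αp) :
    (∃ σ : A, IsSyncWord X [σ] ∧ (Dset X σ αm).Nonempty) ∧
    (∀ σ : A, IsSyncWord X [σ] → (Dset X σ αm).Finite) := by
  obtain ⟨-, hXc, hXs⟩ := hX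
  obtain ⟨⟨-, -, hA, ⟨x, hx, -, ⟨n, htail⟩, a, b, hab, habsync⟩, hCm, -⟩, -⟩ := hchar
  have hα := not_isSyncWord_singleton_of_condA hA
  obtain ⟨N, hN⟩ := exists_forall_mem_Dset_length_le hXc hXs hss hCm hα
  refine ⟨?_, fun σ hσ => (List.finite_length_le A N).subset (hN σ hσ)⟩
  obtain ⟨Q, hQ⟩ := hss.2
  obtain ⟨i₀, -, -, hi₀⟩ := hQ x hx a b hab habsync
  obtain ⟨i, hi, hlast⟩ := exists_greatest_isSyncWord_singleton htail hα ⟨i₀, hi₀⟩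
  exact ⟨x i, hi, Dset_nonempty_of_forall_not_isSyncWord hx htail hlast⟩
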